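/- Let f ∈ Hol(α) be a bounded α-Hölder potential with conformal measure ν, eigenvalue λ > 0 and Hölder eigenfunction h normalized so that ∫_X h dν = 1. Then there exist constants C > 0 and s ∈ (0,1) such that for every n ∈ ℕ and uniformly in x ∈ X: 1 − 2Cs^n ≤ L_f^n 1(x)/(λ^n h(x)) ≤ 1 + 2Cs^n. Consequently, for every x ∈ X, (1/n)·log L_f^n 1(x) → log λ as n → ∞. -/

import Mathlib

/-!
Dividing by the eigenfunction turns `L_f` into a Markov operator: with the kernel
`k(a, x) = e^{f(ax)} h(ax) / (λ h(x))` one has `L_fⁿ 1 / (λⁿ h) = Tⁿ (1 / h)`, where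
`T φ (x) = ∫ φ(ax) k(a, x) dp(a)`. Since `f` and `log h` are Hölder, `k(a, ·)` is log-Hölder, and as
the branches `x ↦ ax` contract `d_X` by `1/2`, the `n`-step kernels have uniformly bounded
distortion. This gives a Doeblin bound: over `N` steps the oscillation of `Tⁿ φ` shrinks by a factor
`1 - δ`, up to an error `2^{-αN}` times the Hölder constant of `φ`, while that Hölder constant
shrinks like `2^{-αN}` up to a multiple of the oscillation. A suitable combination of the two
therefore decays geometrically. Finally `∫ Tⁿ(1/h) h dν = λ⁻ⁿ ∫ L_fⁿ 1 dν = 1 = ∫ h dν`, so the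
oscillation of `Tⁿ(1/h)` bounds its distance to `1`; the logarithmic limit follows.
-/

open MeasureTheory Filter Topology BoundedContinuousFunction

noncomputable section

variable {E : Type*} [MetricSpace E]

/-- The metric on the sequence space `X = E^ℕ`:
`d_X(x,y) = ∑_{n=1}^∞ 2⁻ⁿ · min(d_E(x_n,y_n), 1)`. -/
def dX (x y : ℕ → E) : ℝ :=
  ∑' n : ℕ, ((1 : ℝ) / 2) ^ (n + 1) * min (dist (x n) (y n)) 1

/-- The left shift `σ(x₁,x₂,x₃,…) = (x₂,x₃,…)`. -/
def shift (x : ℕ → E) : ℕ → E := fun n => x (n + 1)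

theorem continuous_shift : Continuous (shift (E := E)) :=
  continuous_pi fun n => continuous_apply (n + 1)

/-- Prepending one symbol: `ax = (a, x₁, x₂, …)`. -/
def cons (a : E) (x : ℕ → E) : ℕ → E := fun n => Nat.casesOn n a x

/-- Prepending a finite word `a = (a₁,…,a_n)`. -/
def prepend {n : ℕ} (a : Fin n → E) (x : ℕ → E) : ℕ → E :=
  fun k => if h : k < n then a ⟨k, h⟩ else x (k - n)

/-- Birkhoff sums `f_n = ∑_{k=0}^{n-1} f ∘ σᵏ`. -/
def birkhoff (f : (ℕ → E) → ℝ) (n : ℕ) (x : ℕ → E) : ℝ :=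
  ∑ k ∈ Finset.range n, f (shift^[k] x)

/-- Boundedness of a real-valued function on `X`. -/
def Bdd (g : (ℕ → E) → ℝ) : Prop := ∃ M : ℝ, ∀ x, |g x| ≤ M

/-- `g` is `α`-Hölder with constant `C` (w.r.t. the metric `dX`). -/
def HolderConst (α C : ℝ) (g : (ℕ → E) → ℝ) : Prop :=
  ∀ x y, |g x - g y| ≤ C * dX x y ^ α

/-- `g ∈ Hol(α)`: bounded, continuous and `α`-Hölder. -/
def MemHol (α : ℝ) (g : (ℕ → E) → ℝ) : Prop :=
  Continuous g ∧ Bdd g ∧ ∃ C : ℝ, HolderConst α C g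

/-- `g ∈ C_b(X,ℝ)`: bounded and continuous. -/
def MemCb (g : (ℕ → E) → ℝ) : Prop := Continuous g ∧ Bdd g

/-- The Hölder seminorm `D_α(g) = sup_{x ≠ y} |g x - g y| / d_X(x,y)^α`. -/
def Dalpha (α : ℝ) (g : (ℕ → E) → ℝ) : ℝ :=
  sSup {r : ℝ | ∃ x y : ℕ → E, x ≠ y ∧ r = |g x - g y| / dX x y ^ α}

/-- The supremum norm `‖g‖_∞`. -/
def supNorm (g : (ℕ → E) → ℝ) : ℝ := ⨆ x : ℕ → E, |g x|

/-- The Hölder norm `‖g‖_α = ‖g‖_∞ + D_α(g)`. -/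
def alphaNorm (α : ℝ) (g : (ℕ → E) → ℝ) : ℝ := supNorm g + Dalpha α g

variable [MeasurableSpace E] [BorelSpace E]

/-- The Ruelle transfer operator `L_f φ(x) = ∫_E e^{f(ax)} φ(ax) dp(a)`. -/
def ruelle (p : Measure E) (f φ : (ℕ → E) → ℝ) : (ℕ → E) → ℝ :=
  fun x => ∫ a, Real.exp (f (cons a x)) * φ (cons a x) ∂p

/-- The normalized operators `P^m_n(φ) = L_f^m(φ · L_f^n 1) / L_f^{m+n} 1`. -/
def Pmn (p : Measure E) (f : (ℕ → E) → ℝ) (m n : ℕ) (φ : (ℕ → E) → ℝ) : (ℕ → E) → ℝ :=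
  fun x => (ruelle p f)^[m] (fun y => φ y * (ruelle p f)^[n] (fun _ => 1) y) x /
    (ruelle p f)^[m + n] (fun _ => 1) x

/-- The equivalent bounded metric `d̄(x,y) = min{1, 4 C_f d_X(x,y)^α}`. -/
def dbar (Cf α : ℝ) (x y : ℕ → E) : ℝ := min 1 (4 * Cf * dX x y ^ α)

/-- The Wasserstein distance associated to `d̄`, via Kantorovich duality. -/
def wass (Cf α : ℝ) (μ₁ μ₂ : Measure (ℕ → E)) : ℝ :=
  sSup {r : ℝ | ∃ g : (ℕ → E) → ℝ,
    (∀ x y, |g x - g y| ≤ dbar Cf α x y) ∧ r = (∫ x, g x ∂μ₁) - ∫ x, g x ∂μ₂}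

section RealInequalities

lemma Real.exp_mul_sub_one_le {G t : ℝ} (hG : 0 ≤ G) (ht0 : 0 ≤ t) (ht1 : t ≤ 1) :
    Real.exp (G * t) - 1 ≤ G * Real.exp G * t := by
  have hu : 0 ≤ G * t := mul_nonneg hG ht0
  -- `(1 - u) e^u ≤ e^{-u} e^u = 1`
  have key : Real.exp (G * t) - 1 ≤ G * t * Real.exp (G * t) := by
    have h := mul_le_mul_of_nonneg_right (Real.add_one_le_exp (-(G * t))) (Real.exp_pos (G * t)).le
    rw [← Real.exp_add, neg_add_cancel, Real.exp_zero] at h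
    linarith
  calc Real.exp (G * t) - 1 ≤ G * t * Real.exp (G * t) := key
    _ ≤ G * t * Real.exp G :=
      mul_le_mul_of_nonneg_left (Real.exp_le_exp.2 (mul_le_of_le_one_right hG ht1)) hu
    _ = G * Real.exp G * t := by ring

lemma abs_sub_le_sub_one_mul {a b r : ℝ} (ha : 0 < a) (hb : 0 < b) (hab : a ≤ r * b)
    (hba : b ≤ r * a) : |a - b| ≤ (r - 1) * b := by
  have hr : 0 < r := pos_of_mul_pos_left (ha.trans_le hab) hb.le
  rw [abs_le]
  constructor
  · nlinarith [mul_pos hr hb, sq_nonneg (r - 1)]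
  · linarith

lemma pow_div_le_inv_mul_rpow {ρ : ℝ} (hρ0 : 0 < ρ) (hρ1 : ρ ≤ 1) {N : ℕ} (hN : 0 < N)
    (n : ℕ) : ρ ^ (n / N) ≤ ρ⁻¹ * (ρ ^ (1 / N : ℝ)) ^ n := by
  have hNR : (0 : ℝ) < N := Nat.cast_pos.2 hN
  have hlt : (n : ℝ) / N < (n / N : ℕ) + 1 := by
    rw [div_lt_iff₀ hNR]
    exact_mod_cast (add_one_mul (n / N) N).symm ▸ Nat.lt_div_mul_add hN
  rw [← Real.rpow_natCast (ρ ^ _), ← Real.rpow_mul hρ0.le, le_inv_mul_iff₀ hρ0, ← pow_succ',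
    ← Real.rpow_natCast, one_div_mul_eq_div]
  exact Real.rpow_le_rpow_of_exponent_ge hρ0 hρ1 (by push_cast; linarith)

/-- Weights for which the Lyapunov function `w + γ D` contracts by `ρ` over `N` steps when
`w ↦ (1 - δ) w + β ^ N D` and `D ↦ β ^ N D + K w`. -/
lemma exists_lyapunov_weights {δ K β : ℝ} (hδ0 : 0 < δ) (hδ1 : δ ≤ 1) (hK : 0 ≤ K)
    (hβ0 : 0 ≤ β) (hβ1 : β < 1) :
    ∃ γ ρ : ℝ, ∃ N : ℕ, 0 < N ∧ 0 ≤ γ ∧ 0 < ρ ∧ ρ < 1 ∧ 1 - δ + γ * K ≤ ρ ∧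
      (1 + γ) * β ^ N ≤ ρ * γ := by
  set γ := δ / (2 * (K + 1)) with hγ
  have hγ0 : 0 < γ := by positivity
  have hγK : γ * K ≤ δ / 2 := by
    rw [hγ, div_mul_eq_mul_div, div_le_div_iff₀ (by positivity) two_pos]
    nlinarith
  have hρ0 : 0 < 1 - δ / 2 := by linarith
  obtain ⟨N₀, hN₀⟩ := exists_pow_lt_of_lt_one
    (show 0 < (1 - δ / 2) * γ / (1 + γ) by positivity) hβ1
  refine ⟨γ, 1 - δ / 2, N₀ + 1, N₀.succ_pos, hγ0.le, hρ0, by linarith, by linarith, ?_⟩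
  have := (lt_div_iff₀ (by positivity)).1
    ((pow_le_pow_of_le_one hβ0 hβ1.le (show N₀ ≤ N₀ + 1 by omega)).trans_lt hN₀)
  linarith

end RealInequalities

section SequenceSpace

variable {E : Type*} [MetricSpace E]

lemma summable_half_pow_succ : Summable fun n : ℕ => ((1 : ℝ) / 2) ^ (n + 1) := by
  simpa only [pow_succ] using summable_geometric_two.mul_right (1 / 2)

lemma tsum_half_pow_succ : ∑' n : ℕ, ((1 : ℝ) / 2) ^ (n + 1) = 1 := by
  simp only [pow_succ]
  rw [tsum_mul_right, tsum_geometric_two]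
  norm_num

lemma dX_term_nonneg (x y : ℕ → E) (n : ℕ) :
    0 ≤ ((1 : ℝ) / 2) ^ (n + 1) * min (dist (x n) (y n)) 1 :=
  mul_nonneg (by positivity) (le_min dist_nonneg zero_le_one)

lemma dX_term_le (x y : ℕ → E) (n : ℕ) :
    ((1 : ℝ) / 2) ^ (n + 1) * min (dist (x n) (y n)) 1 ≤ ((1 : ℝ) / 2) ^ (n + 1) :=
  mul_le_of_le_one_right (by positivity) (min_le_right _ _)

lemma summable_dX_term (x y : ℕ → E) :
    Summable fun n => ((1 : ℝ) / 2) ^ (n + 1) * min (dist (x n) (y n)) 1 :=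
  .of_nonneg_of_le (dX_term_nonneg x y) (dX_term_le x y) summable_half_pow_succ

lemma dX_nonneg (x y : ℕ → E) : 0 ≤ dX x y :=
  tsum_nonneg (dX_term_nonneg x y)

lemma dX_le_one (x y : ℕ → E) : dX x y ≤ 1 :=
  tsum_half_pow_succ ▸
    (summable_dX_term x y).tsum_le_tsum (dX_term_le x y) summable_half_pow_succ

lemma dX_comm (x y : ℕ → E) : dX x y = dX y x := by
  simp only [dX, dist_comm]

lemma dX_cons_cons (a : E) (x y : ℕ → E) : dX (cons a x) (cons a y) = dX x y / 2 := by
  rw [dX, (summable_dX_term _ _).tsum_eq_zero_add, dX, ← tsum_div_const]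
  rw [show dist (cons a x 0) (cons a y 0) = 0 from dist_self a, min_eq_left zero_le_one,
    mul_zero, zero_add]
  exact tsum_congr fun n => by
    change _ * min (dist (x n) (y n)) 1 = _
    ring

lemma dX_rpow_nonneg (α : ℝ) (x y : ℕ → E) : 0 ≤ dX x y ^ α :=
  Real.rpow_nonneg (dX_nonneg x y) α

lemma dX_rpow_le_one {α : ℝ} (hα : 0 ≤ α) (x y : ℕ → E) : dX x y ^ α ≤ 1 :=
  Real.rpow_le_one (dX_nonneg x y) (dX_le_one x y) hα

lemma dX_cons_cons_rpow (α : ℝ) (a : E) (x y : ℕ → E) :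
    dX (cons a x) (cons a y) ^ α = (1 / 2 : ℝ) ^ α * dX x y ^ α := by
  rw [dX_cons_cons, div_eq_mul_one_div, mul_comm, Real.mul_rpow (by norm_num) (dX_nonneg x y)]

lemma continuous_cons_left (x : ℕ → E) : Continuous fun a : E => cons a x :=
  continuous_pi fun n => by cases n <;> simp only [cons] <;> fun_prop

lemma continuous_cons_right (a : E) : Continuous (cons a : (ℕ → E) → ℕ → E) :=
  continuous_pi fun n => by cases n <;> simp only [cons] <;> fun_prop

lemma memCb_const (r : ℝ) : MemCb (fun _ : ℕ → E => r) :=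
  ⟨continuous_const, |r|, fun _ => le_rfl⟩

lemma HolderConst.mono {α C C' : ℝ} {g : (ℕ → E) → ℝ} (hg : HolderConst α C g) (hC : C ≤ C') :
    HolderConst α C' g := fun x y =>
  (hg x y).trans (mul_le_mul_of_nonneg_right hC (dX_rpow_nonneg α x y))

lemma HolderConst.add_const {α C : ℝ} {g : (ℕ → E) → ℝ} (hg : HolderConst α C g) (r : ℝ) :
    HolderConst α C fun z => g z + r := fun x y => by
  simpa only [add_sub_add_right_eq_sub] using hg x y

lemma MemCb.affine {φ : (ℕ → E) → ℝ} (hφ : MemCb φ) (A B : ℝ) : MemCb fun z => A * φ z + B := by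
  obtain ⟨M, hM⟩ := hφ.2
  refine ⟨(continuous_const.mul hφ.1).add continuous_const, |A| * M + |B|, fun z => ?_⟩
  calc |A * φ z + B| ≤ |A| * |φ z| + |B| := by rw [← abs_mul]; exact abs_add_le _ _
    _ ≤ |A| * M + |B| := by gcongr; exact hM z

lemma MemCb.add_const {φ : (ℕ → E) → ℝ} (hφ : MemCb φ) (r : ℝ) : MemCb fun z => φ z + r := by
  simpa only [one_mul] using hφ.affine 1 r

lemma MemCb.mul {φ ψ : (ℕ → E) → ℝ} (hφ : MemCb φ) (hψ : MemCb ψ) : MemCb fun z => φ z * ψ z := by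
  obtain ⟨M, hM⟩ := hφ.2
  obtain ⟨M', hM'⟩ := hψ.2
  refine ⟨hφ.1.mul hψ.1, M * M', fun z => ?_⟩
  rw [abs_mul]
  exact mul_le_mul (hM z) (hM' z) (abs_nonneg _) ((abs_nonneg _).trans (hM z))

lemma le_exp_mul_of_holderConst {α c D : ℝ} {g : (ℕ → E) → ℝ} (hc : 0 < c) (hgc : ∀ x, c ≤ g x)
    (hD : 0 ≤ D) (hg : HolderConst α D g) (x y : ℕ → E) :
    g x ≤ Real.exp (D / c * dX x y ^ α) * g y := by
  have ht := dX_rpow_nonneg α x y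
  have hgy : 1 ≤ g y / c := (one_le_div hc).2 (hgc y)
  calc g x ≤ g y + D * dX x y ^ α := by linarith [(abs_le.1 (hg x y)).2]
    _ ≤ g y + g y / c * (D * dX x y ^ α) := by
        nlinarith [mul_nonneg hD ht]
    _ = g y * (D / c * dX x y ^ α + 1) := by ring
    _ ≤ g y * Real.exp (D / c * dX x y ^ α) :=
        mul_le_mul_of_nonneg_left (Real.add_one_le_exp _) (hc.le.trans (hgc y))
    _ = Real.exp (D / c * dX x y ^ α) * g y := mul_comm _ _

lemma HolderConst.inv {α c D : ℝ} {g : (ℕ → E) → ℝ} (hc : 0 < c) (hgc : ∀ x, c ≤ g x)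
    (hg : HolderConst α D g) : HolderConst α (D / c ^ 2) fun z => (g z)⁻¹ := by
  intro x y
  have hx := hc.trans_le (hgc x)
  have hy := hc.trans_le (hgc y)
  rw [inv_sub_inv hx.ne' hy.ne', abs_div, abs_of_pos (mul_pos hx hy), abs_sub_comm,
    div_le_iff₀ (mul_pos hx hy)]
  have hD : 0 ≤ D / c ^ 2 * dX x y ^ α := by
    rw [div_mul_eq_mul_div]
    exact div_nonneg ((abs_nonneg _).trans (hg x y)) (sq_nonneg c)
  calc |g x - g y| ≤ D * dX x y ^ α := hg x y
    _ = D / c ^ 2 * dX x y ^ α * c ^ 2 := by field_simp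
    _ ≤ D / c ^ 2 * dX x y ^ α * (g x * g y) := by
        gcongr
        nlinarith [hgc x, hgc y]

end SequenceSpace

section TransferOperator

variable {E : Type*} [MetricSpace E] [MeasurableSpace E]

def transferOp (p : Measure E) (k : E → (ℕ → E) → ℝ) (φ : (ℕ → E) → ℝ) (x : ℕ → E) : ℝ :=
  ∫ a, φ (cons a x) * k a x ∂p

/-- A positive Markov kernel for the branches `x ↦ cons a x`, log-Hölder in `x`. -/
structure IsHolderKernel (p : Measure E) (α G : ℝ) (k : E → (ℕ → E) → ℝ) : Prop where
  pos : ∀ a x, 0 < k a x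
  integral_eq_one : ∀ x, ∫ a, k a x ∂p = 1
  le_exp_mul : ∀ a x y, k a x ≤ Real.exp (G * dX x y ^ α) * k a y
  const_nonneg : 0 ≤ G
  continuous_left : ∀ x, Continuous fun a => k a x
  continuous_right : ∀ a, Continuous (k a)

namespace IsHolderKernel

variable {p : Measure E} {α G : ℝ} {k : E → (ℕ → E) → ℝ} {φ ψ : (ℕ → E) → ℝ}

lemma integrable (hk : IsHolderKernel p α G k) (x : ℕ → E) : Integrable (fun a => k a x) p :=
  .of_integral_ne_zero (by rw [hk.integral_eq_one]; exact one_ne_zero)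

lemma integral_const_mul (hk : IsHolderKernel p α G k) (r : ℝ) (x : ℕ → E) :
    ∫ a, r * k a x ∂p = r := by
  rw [MeasureTheory.integral_const_mul, hk.integral_eq_one, mul_one]

lemma transferOp_const (hk : IsHolderKernel p α G k) (r : ℝ) (x : ℕ → E) :
    transferOp p k (fun _ => r) x = r :=
  hk.integral_const_mul r x

lemma le_exp_const_mul (hk : IsHolderKernel p α G k) (hα : 0 ≤ α) (a : E) (x y : ℕ → E) :
    k a x ≤ Real.exp G * k a y :=
  (hk.le_exp_mul a x y).trans <| mul_le_mul_of_nonneg_right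
    (Real.exp_le_exp.2 (mul_le_of_le_one_right hk.const_nonneg (dX_rpow_le_one hα x y)))
    (hk.pos a y).le

variable [OpensMeasurableSpace E]

lemma integrable_mul (hk : IsHolderKernel p α G k) (hφ : MemCb φ) (x y : ℕ → E) :
    Integrable (fun a => φ (cons a x) * k a y) p := by
  obtain ⟨M, hM⟩ := hφ.2
  exact (hk.integrable y).bdd_mul (hφ.1.comp (continuous_cons_left x)).aestronglyMeasurable
    (ae_of_all _ fun a => hM _)

lemma transferOp_affine (hk : IsHolderKernel p α G k) (hφ : MemCb φ) (A B : ℝ) (x : ℕ → E) :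
    transferOp p k (fun z => A * φ z + B) x = A * transferOp p k φ x + B := by
  simp only [transferOp, add_mul, mul_assoc]
  rw [integral_add ((hk.integrable_mul hφ x x).const_mul A) ((hk.integrable x).const_mul B),
    MeasureTheory.integral_const_mul, hk.integral_const_mul]

lemma transferOp_mono (hk : IsHolderKernel p α G k) (hφ : MemCb φ) (hψ : MemCb ψ)
    (hle : ∀ y, φ y ≤ ψ y) (x : ℕ → E) : transferOp p k φ x ≤ transferOp p k ψ x :=
  integral_mono (hk.integrable_mul hφ x x) (hk.integrable_mul hψ x x)
    fun a => mul_le_mul_of_nonneg_right (hle _) (hk.pos a x).le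

lemma transferOp_le (hk : IsHolderKernel p α G k) (hφ : MemCb φ) {M : ℝ}
    (hM : ∀ y, φ y ≤ M) (x : ℕ → E) : transferOp p k φ x ≤ M :=
  hk.transferOp_const M x ▸ hk.transferOp_mono hφ (memCb_const M) hM x

lemma le_transferOp (hk : IsHolderKernel p α G k) (hφ : MemCb φ) {m : ℝ}
    (hm : ∀ y, m ≤ φ y) (x : ℕ → E) : m ≤ transferOp p k φ x :=
  hk.transferOp_const m x ▸ hk.transferOp_mono (memCb_const m) hφ hm x

lemma continuous_transferOp (hk : IsHolderKernel p α G k) (hα : 0 ≤ α) (hφ : MemCb φ) :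
    Continuous (transferOp p k φ) := by
  obtain ⟨M, hM⟩ := hφ.2
  refine continuous_iff_continuousAt.2 fun x₀ => continuousAt_of_dominated
    (bound := fun a => M * (Real.exp G * k a x₀)) ?_ ?_
    ((hk.integrable x₀).const_mul _ |>.const_mul _) ?_
  · exact Eventually.of_forall fun x => (hk.integrable_mul hφ x x).aestronglyMeasurable
  · refine Eventually.of_forall fun x => ae_of_all _ fun a => ?_
    rw [Real.norm_eq_abs, abs_mul, abs_of_pos (hk.pos a x)]
    exact mul_le_mul (hM _) (hk.le_exp_const_mul hα a x x₀) (hk.pos a x).le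
      ((abs_nonneg _).trans (hM (cons a x)))
  · exact ae_of_all _ fun a =>
      ((hφ.1.comp (continuous_cons_right a)).mul (hk.continuous_right a)).continuousAt

lemma memCb_transferOp (hk : IsHolderKernel p α G k) (hα : 0 ≤ α) (hφ : MemCb φ) :
    MemCb (transferOp p k φ) := by
  obtain ⟨M, hM⟩ := hφ.2
  refine ⟨hk.continuous_transferOp hα hφ, M, fun x => abs_le.2 ⟨?_, ?_⟩⟩
  · exact hk.le_transferOp hφ (fun y => (abs_le.1 (hM y)).1) x
  · exact hk.transferOp_le hφ (fun y => (abs_le.1 (hM y)).2) x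

lemma memCb_iterate_transferOp (hk : IsHolderKernel p α G k) (hα : 0 ≤ α) (hφ : MemCb φ)
    (n : ℕ) : MemCb ((transferOp p k)^[n] φ) := by
  induction n with
  | zero => exact hφ
  | succ n ih => exact Function.iterate_succ_apply' (transferOp p k) n φ ▸
      hk.memCb_transferOp hα ih

lemma iterate_transferOp_le (hk : IsHolderKernel p α G k) (hα : 0 ≤ α) (hφ : MemCb φ) {M : ℝ}
    (hM : ∀ y, φ y ≤ M) (n : ℕ) (x : ℕ → E) : (transferOp p k)^[n] φ x ≤ M := by
  induction n generalizing x with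
  | zero => exact hM x
  | succ n ih =>
    rw [Function.iterate_succ_apply']
    exact hk.transferOp_le (hk.memCb_iterate_transferOp hα hφ n) ih x

lemma iterate_transferOp_nonneg (hk : IsHolderKernel p α G k) (hα : 0 ≤ α) (hφ : MemCb φ)
    (hφ0 : ∀ y, 0 ≤ φ y) (n : ℕ) (x : ℕ → E) : 0 ≤ (transferOp p k)^[n] φ x := by
  induction n generalizing x with
  | zero => exact hφ0 x
  | succ n ih =>
    rw [Function.iterate_succ_apply']
    exact hk.le_transferOp (hk.memCb_iterate_transferOp hα hφ n) ih x

lemma iterate_transferOp_add_const (hk : IsHolderKernel p α G k) (hα : 0 ≤ α) (hφ : MemCb φ)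
    (r : ℝ) (n : ℕ) (x : ℕ → E) :
    (transferOp p k)^[n] (fun z => φ z + r) x = (transferOp p k)^[n] φ x + r := by
  induction n generalizing x with
  | zero => rfl
  | succ n ih =>
    simp only [Function.iterate_succ_apply']
    rw [funext ih]
    simpa only [one_mul] using
      hk.transferOp_affine (hk.memCb_iterate_transferOp hα hφ n) 1 r x

lemma abs_transferOp_sub_le (hk : IsHolderKernel p α G k) (hφ : MemCb φ) {w : ℝ}
    (hw : ∀ x y, |φ x - φ y| ≤ w) (x y : ℕ → E) :
    |transferOp p k φ x - transferOp p k φ y| ≤ w := by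
  have upper : ∀ x z, transferOp p k φ x ≤ φ z + w := fun x z =>
    hk.transferOp_le hφ (fun y => by linarith [(abs_le.1 (hw y z)).2]) x
  have one_sided : ∀ x y, transferOp p k φ x - transferOp p k φ y ≤ w := fun x y => by
    linarith [hk.le_transferOp (m := transferOp p k φ x - w) hφ
      (fun z => by linarith [upper x z]) y]
  exact abs_sub_le_iff.2 ⟨one_sided x y, one_sided y x⟩

lemma abs_iterate_transferOp_sub_le (hk : IsHolderKernel p α G k) (hα : 0 ≤ α) (hφ : MemCb φ)
    {w : ℝ} (hw : ∀ x y, |φ x - φ y| ≤ w) (n : ℕ) (x y : ℕ → E) :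
    |(transferOp p k)^[n] φ x - (transferOp p k)^[n] φ y| ≤ w := by
  induction n generalizing x y with
  | zero => exact hw x y
  | succ n ih =>
    simp only [Function.iterate_succ_apply']
    exact hk.abs_transferOp_sub_le (hk.memCb_iterate_transferOp hα hφ n) ih x y

lemma transferOp_sub_eq_integral (hk : IsHolderKernel p α G k) (hφ : MemCb φ) (r : ℝ)
    (x y : ℕ → E) :
    transferOp p k φ x - transferOp p k φ y =
      ∫ a, ((φ (cons a x) - φ (cons a y)) * k a x + (φ (cons a y) - r) * (k a x - k a y)) ∂p := by
  have hx := hk.integrable_mul hφ x x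
  have hy := hk.integrable_mul hφ y y
  have hr := ((hk.integrable x).sub (hk.integrable y)).const_mul r
  have e : ∀ a, (φ (cons a x) - φ (cons a y)) * k a x + (φ (cons a y) - r) * (k a x - k a y) =
      φ (cons a x) * k a x - φ (cons a y) * k a y - r * (k a x - k a y) := fun a => by ring
  simp only [e]
  rw [integral_sub (by exact hx.sub hy) (by exact hr), integral_sub hx hy,
    MeasureTheory.integral_const_mul, integral_sub (hk.integrable x) (hk.integrable y),
    hk.integral_eq_one, hk.integral_eq_one, sub_self, mul_zero, sub_zero, transferOp, transferOp]

lemma holderConst_transferOp (hk : IsHolderKernel p α G k) (hα : 0 ≤ α) (hφ : MemCb φ) {D w : ℝ}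
    (hD : HolderConst α D φ) (hw : ∀ x y, |φ x - φ y| ≤ w) :
    HolderConst α ((1 / 2 : ℝ) ^ α * D + G * Real.exp G * w) (transferOp p k φ) := by
  intro x y
  set t := dX x y ^ α
  have hw0 : 0 ≤ w := (abs_nonneg _).trans (hw x x)
  have hkernel : ∀ a, |k a x - k a y| ≤ (Real.exp (G * t) - 1) * k a y := fun a =>
    abs_sub_le_sub_one_mul (hk.pos a x) (hk.pos a y) (hk.le_exp_mul a x y)
      (by simpa only [dX_comm y x] using hk.le_exp_mul a y x)
  have hpoint : ∀ a, ‖(φ (cons a x) - φ (cons a y)) * k a x +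
      (φ (cons a y) - φ y) * (k a x - k a y)‖ ≤
      ((1 / 2 : ℝ) ^ α * D * t) * k a x + (w * (Real.exp (G * t) - 1)) * k a y := by
    intro a
    have h1 := hD (cons a x) (cons a y)
    rw [dX_cons_cons_rpow] at h1
    rw [Real.norm_eq_abs]
    refine (abs_add_le _ _).trans (add_le_add ?_ ?_)
    · rw [abs_mul, abs_of_pos (hk.pos a x)]
      exact mul_le_mul_of_nonneg_right (by linarith) (hk.pos a x).le
    · rw [abs_mul, mul_assoc]
      exact mul_le_mul (hw _ _) (hkernel a) (abs_nonneg _) hw0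
  calc |transferOp p k φ x - transferOp p k φ y|
      ≤ ∫ a, (((1 / 2 : ℝ) ^ α * D * t) * k a x + (w * (Real.exp (G * t) - 1)) * k a y) ∂p := by
        rw [hk.transferOp_sub_eq_integral hφ (φ y), ← Real.norm_eq_abs]
        exact norm_integral_le_of_norm_le
          (((hk.integrable x).const_mul _).add ((hk.integrable y).const_mul _))
          (ae_of_all _ hpoint)
    _ = (1 / 2 : ℝ) ^ α * D * t + w * (Real.exp (G * t) - 1) := by
        rw [integral_add ((hk.integrable x).const_mul _) ((hk.integrable y).const_mul _),
          hk.integral_const_mul, hk.integral_const_mul]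
    _ ≤ ((1 / 2 : ℝ) ^ α * D + G * Real.exp G * w) * t := by
        have := mul_le_mul_of_nonneg_left (Real.exp_mul_sub_one_le hk.const_nonneg
          (dX_rpow_nonneg α x y) (dX_rpow_le_one hα x y)) hw0
        nlinarith

lemma holderConst_iterate_transferOp (hk : IsHolderKernel p α G k) (hα : 0 < α) (hφ : MemCb φ)
    {D w : ℝ} (hD : HolderConst α D φ) (hw : ∀ x y, |φ x - φ y| ≤ w) (n : ℕ) :
    HolderConst α (((1 / 2 : ℝ) ^ α) ^ n * D + G * Real.exp G / (1 - (1 / 2 : ℝ) ^ α) * w)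
      ((transferOp p k)^[n] φ) := by
  have hβ1 : (1 / 2 : ℝ) ^ α < 1 := Real.rpow_lt_one (by norm_num) (by norm_num) hα
  induction n with
  | zero =>
    intro x y
    have hK : 0 ≤ G * Real.exp G / (1 - (1 / 2 : ℝ) ^ α) * w :=
      mul_nonneg (div_nonneg (by have := hk.const_nonneg; positivity) (by linarith))
        ((abs_nonneg _).trans (hw x x))
    refine (hD x y).trans (mul_le_mul_of_nonneg_right ?_ (dX_rpow_nonneg α x y))
    simpa using hK
  | succ n ih =>
    rw [Function.iterate_succ']
    refine (hk.holderConst_transferOp hα.le (hk.memCb_iterate_transferOp hα.le hφ n) ih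
      (hk.abs_iterate_transferOp_sub_le hα.le hφ hw n)).mono (le_of_eq ?_)
    have : 1 - (1 / 2 : ℝ) ^ α ≠ 0 := (sub_pos.2 hβ1).ne'
    field_simp
    ring

lemma transferOp_ge_of_distortion (hk : IsHolderKernel p α G k) (hψ : MemCb ψ)
    (hψ0 : ∀ z, 0 ≤ ψ z) {c B : ℝ} (hB : 0 ≤ B) (hGc : G + c * (1 / 2 : ℝ) ^ α = c)
    (hψge : ∀ x y, Real.exp (-(c * dX x y ^ α)) * ψ y - B * dX x y ^ α ≤ ψ x) (x y : ℕ → E) :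
    Real.exp (-(c * dX x y ^ α)) * transferOp p k ψ y - B * (1 / 2 : ℝ) ^ α * dX x y ^ α ≤
      transferOp p k ψ x := by
  set β := (1 / 2 : ℝ) ^ α
  set t := dX x y ^ α
  set A := Real.exp (-(c * (β * t)))
  have hpoint : ∀ a, Real.exp (-(G * t)) * ((A * ψ (cons a y) + -(B * (β * t))) * k a y) ≤
      ψ (cons a x) * k a x := by
    intro a
    have h1 := hψge (cons a x) (cons a y)
    rw [dX_cons_cons_rpow] at h1
    have h2 : Real.exp (-(G * t)) * k a y ≤ k a x := by
      rw [Real.exp_neg, inv_mul_le_iff₀ (Real.exp_pos _)]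
      simpa only [dX_comm y x] using hk.le_exp_mul a y x
    calc Real.exp (-(G * t)) * ((A * ψ (cons a y) + -(B * (β * t))) * k a y)
        = (A * ψ (cons a y) - B * (β * t)) * (Real.exp (-(G * t)) * k a y) := by ring
      _ ≤ ψ (cons a x) * (Real.exp (-(G * t)) * k a y) :=
        mul_le_mul_of_nonneg_right h1 (by have := hk.pos a y; positivity)
      _ ≤ ψ (cons a x) * k a x := mul_le_mul_of_nonneg_left h2 (hψ0 _)
  have hmono := integral_mono ((hk.integrable_mul (hψ.affine A _) y y).const_mul _)
    (hk.integrable_mul hψ x x) hpoint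
  rw [MeasureTheory.integral_const_mul] at hmono
  change Real.exp (-(G * t)) * transferOp p k (fun z => A * ψ z + -(B * (β * t))) y ≤
    transferOp p k ψ x at hmono
  rw [hk.transferOp_affine hψ] at hmono
  have hA : Real.exp (-(G * t)) * A = Real.exp (-(c * t)) := by
    rw [← Real.exp_add]
    congr 1
    linear_combination (-t) * hGc
  have hshrink : Real.exp (-(G * t)) ≤ 1 :=
    Real.exp_le_one_iff.2 (neg_nonpos.2 (mul_nonneg hk.const_nonneg (dX_rpow_nonneg α x y)))
  have hBt : 0 ≤ B * (β * t) := by have := dX_rpow_nonneg α x y; positivity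
  calc Real.exp (-(c * t)) * transferOp p k ψ y - B * β * t
      = Real.exp (-(G * t)) * A * transferOp p k ψ y - B * (β * t) := by rw [hA]; ring
    _ ≤ Real.exp (-(G * t)) * A * transferOp p k ψ y - Real.exp (-(G * t)) * (B * (β * t)) := by
        nlinarith [mul_le_mul_of_nonneg_right hshrink hBt]
    _ = Real.exp (-(G * t)) * (A * transferOp p k ψ y + -(B * (β * t))) := by ring
    _ ≤ transferOp p k ψ x := hmono

/-- Doeblin-type lower bound: the `n`-step kernel has distortion at most
`exp (G / (1 - 2^{-α}) * dX x y ^ α)`. -/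
lemma iterate_transferOp_ge (hk : IsHolderKernel p α G k) (hα : 0 < α) (hφ : MemCb φ)
    (hφ0 : ∀ y, 0 ≤ φ y) {D : ℝ} (hD0 : 0 ≤ D) (hD : HolderConst α D φ) (n : ℕ) (x y : ℕ → E) :
    Real.exp (-(G / (1 - (1 / 2 : ℝ) ^ α) * dX x y ^ α)) * (transferOp p k)^[n] φ y
      - D * ((1 / 2 : ℝ) ^ α) ^ n * dX x y ^ α ≤ (transferOp p k)^[n] φ x := by
  have hβ1 : (1 / 2 : ℝ) ^ α < 1 := Real.rpow_lt_one (by norm_num) (by norm_num) hα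
  have hc0 : 0 ≤ G / (1 - (1 / 2 : ℝ) ^ α) := div_nonneg hk.const_nonneg (by linarith)
  have hGc : G + G / (1 - (1 / 2 : ℝ) ^ α) * (1 / 2 : ℝ) ^ α = G / (1 - (1 / 2 : ℝ) ^ α) := by
    have : 1 - (1 / 2 : ℝ) ^ α ≠ 0 := (sub_pos.2 hβ1).ne'
    field_simp
    ring
  induction n generalizing x y with
  | zero =>
    have h1 := hD y x
    rw [dX_comm] at h1
    have he : Real.exp (-(G / (1 - (1 / 2 : ℝ) ^ α) * dX x y ^ α)) ≤ 1 :=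
      Real.exp_le_one_iff.2 (neg_nonpos.2 (mul_nonneg hc0 (dX_rpow_nonneg α x y)))
    simp only [Function.iterate_zero, id, pow_zero, mul_one]
    nlinarith [abs_le.1 h1, hφ0 y]
  | succ n ih =>
    simp only [Function.iterate_succ_apply', pow_succ, ← mul_assoc]
    exact hk.transferOp_ge_of_distortion (hk.memCb_iterate_transferOp hα.le hφ n)
      (hk.iterate_transferOp_nonneg hα.le hφ hφ0 n) (by positivity) hGc ih x y

lemma abs_iterate_transferOp_sub_le_doeblin (hk : IsHolderKernel p α G k) (hα : 0 < α)
    (hφ : MemCb φ) {D w : ℝ} (hD0 : 0 ≤ D) (hD : HolderConst α D φ)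
    (hw : ∀ x y, |φ x - φ y| ≤ w) (n : ℕ) (x y : ℕ → E) :
    |(transferOp p k)^[n] φ x - (transferOp p k)^[n] φ y| ≤
      (1 - Real.exp (-(G / (1 - (1 / 2 : ℝ) ^ α)))) * w + D * ((1 / 2 : ℝ) ^ α) ^ n := by
  have hc0 : 0 ≤ G / (1 - (1 / 2 : ℝ) ^ α) := div_nonneg hk.const_nonneg
    (sub_nonneg.2 (Real.rpow_le_one (by norm_num) (by norm_num) hα.le))
  have one_sided : ∀ x y, (transferOp p k)^[n] φ y - (transferOp p k)^[n] φ x ≤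
      (1 - Real.exp (-(G / (1 - (1 / 2 : ℝ) ^ α)))) * w + D * ((1 / 2 : ℝ) ^ α) ^ n := by
    intro x y
    -- shift `φ` so that it is nonnegative and its `n`-th iterate at `y` equals `w`
    set m := (transferOp p k)^[n] φ y - w
    have hm : ∀ z, 0 ≤ φ z + -m := fun z => by
      have := hk.iterate_transferOp_le hα.le hφ (M := φ z + w)
        (fun z' => by linarith [(abs_le.1 (hw z' z)).2]) n y
      linarith
    have hdoe := hk.iterate_transferOp_ge hα (hφ.add_const (-m)) hm hD0 (hD.add_const (-m)) n x y
    rw [hk.iterate_transferOp_add_const hα.le hφ, hk.iterate_transferOp_add_const hα.le hφ]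
      at hdoe
    have ht0 := dX_rpow_nonneg α x y
    have ht1 := dX_rpow_le_one hα.le x y
    have he : Real.exp (-(G / (1 - (1 / 2 : ℝ) ^ α))) ≤
        Real.exp (-(G / (1 - (1 / 2 : ℝ) ^ α) * dX x y ^ α)) :=
      Real.exp_le_exp.2 (neg_le_neg (mul_le_of_le_one_right hc0 ht1))
    have hDβ : 0 ≤ D * ((1 / 2 : ℝ) ^ α) ^ n := by positivity
    have hw0 : 0 ≤ w := (abs_nonneg _).trans (hw x x)
    simp only [m] at hdoe
    nlinarith
  exact abs_sub_le_iff.2 ⟨one_sided y x, one_sided x y⟩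

lemma exists_lyapunov_iterate_mul_le (hk : IsHolderKernel p α G k) (hα : 0 < α) (hφ : MemCb φ)
    {D w : ℝ} (hD0 : 0 ≤ D) (hw0 : 0 ≤ w) (hD : HolderConst α D φ)
    (hw : ∀ x y, |φ x - φ y| ≤ w) {γ ρ : ℝ} {N : ℕ} (hρ : 0 ≤ ρ)
    (hρw : 1 - Real.exp (-(G / (1 - (1 / 2 : ℝ) ^ α))) +
      γ * (G * Real.exp G / (1 - (1 / 2 : ℝ) ^ α)) ≤ ρ)
    (hρD : (1 + γ) * ((1 / 2 : ℝ) ^ α) ^ N ≤ ρ * γ) (t : ℕ) :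
    ∃ w' D', 0 ≤ w' ∧ 0 ≤ D' ∧ HolderConst α D' ((transferOp p k)^[t * N] φ) ∧
      (∀ x y, |(transferOp p k)^[t * N] φ x - (transferOp p k)^[t * N] φ y| ≤ w') ∧
      w' + γ * D' ≤ ρ ^ t * (w + γ * D) := by
  have hβ1 : (1 / 2 : ℝ) ^ α < 1 := Real.rpow_lt_one (by norm_num) (by norm_num) hα
  have hδ1 : Real.exp (-(G / (1 - (1 / 2 : ℝ) ^ α))) ≤ 1 :=
    Real.exp_le_one_iff.2 (neg_nonpos.2 (div_nonneg hk.const_nonneg (by linarith)))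
  have hK : 0 ≤ G * Real.exp G / (1 - (1 / 2 : ℝ) ^ α) :=
    div_nonneg (by have := hk.const_nonneg; positivity) (by linarith)
  induction t with
  | zero =>
    rw [zero_mul]
    exact ⟨w, D, hw0, hD0, hD, hw, by simp⟩
  | succ t ih =>
    obtain ⟨w', D', hw'0, hD'0, hD', hw', hV⟩ := ih
    have hψ := hk.memCb_iterate_transferOp hα.le hφ (t * N)
    rw [add_one_mul, add_comm, Function.iterate_add]
    refine ⟨_, _, by positivity, by positivity, hk.holderConst_iterate_transferOp hα hψ hD' hw' N,
      hk.abs_iterate_transferOp_sub_le_doeblin hα hψ hD'0 hD' hw' N, ?_⟩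
    calc _ ≤ ρ * (w' + γ * D') := by
          nlinarith [mul_le_mul_of_nonneg_right hρw hw'0, mul_le_mul_of_nonneg_right hρD hD'0]
      _ ≤ ρ * (ρ ^ t * (w + γ * D)) := by gcongr
      _ = ρ ^ (t + 1) * (w + γ * D) := by ring

lemma exists_abs_iterate_transferOp_sub_le_geometric (hk : IsHolderKernel p α G k)
    (hα : 0 < α) (hφ : MemCb φ) {D w : ℝ} (hD : HolderConst α D φ)
    (hw : ∀ x y, |φ x - φ y| ≤ w) :
    ∃ C s : ℝ, 0 < s ∧ s < 1 ∧ ∀ n x y,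
      |(transferOp p k)^[n] φ x - (transferOp p k)^[n] φ y| ≤ C * s ^ n := by
  have hβ1 : (1 / 2 : ℝ) ^ α < 1 := Real.rpow_lt_one (by norm_num) (by norm_num) hα
  obtain ⟨γ, ρ, N, hN, hγ, hρ0, hρ1, hρw, hρD⟩ := exists_lyapunov_weights
    (K := G * Real.exp G / (1 - (1 / 2 : ℝ) ^ α)) (Real.exp_pos (-(G / (1 - (1 / 2 : ℝ) ^ α))))
    (Real.exp_le_one_iff.2 (neg_nonpos.2 (div_nonneg hk.const_nonneg (by linarith))))
    (div_nonneg (by have := hk.const_nonneg; positivity) (by linarith)) (by positivity) hβ1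
  set V := max w 0 + γ * max D 0 with hV_def
  refine ⟨ρ⁻¹ * V, ρ ^ (1 / N : ℝ), by positivity,
    Real.rpow_lt_one hρ0.le hρ1 (by positivity), fun n x y => ?_⟩
  obtain ⟨w', D', -, hD'0, -, hw', hV⟩ := hk.exists_lyapunov_iterate_mul_le hα hφ
    (le_max_right D 0) (le_max_right w 0) (hD.mono (le_max_left _ _))
    (fun x y => (hw x y).trans (le_max_left _ _)) hρ0.le hρw hρD (n / N)
  rw [← hV_def] at hV
  have hsplit : (transferOp p k)^[n] φ =
      (transferOp p k)^[n - n / N * N] ((transferOp p k)^[n / N * N] φ) := by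
    rw [← Function.iterate_add_apply, Nat.sub_add_cancel (Nat.div_mul_le_self n _)]
  calc _ ≤ w' := by
        rw [hsplit]
        exact hk.abs_iterate_transferOp_sub_le hα.le
          (hk.memCb_iterate_transferOp hα.le hφ _) hw' _ x y
    _ ≤ ρ ^ (n / N) * V := by nlinarith [mul_nonneg hγ hD'0]
    _ ≤ ρ⁻¹ * (ρ ^ (1 / N : ℝ)) ^ n * V := by
        gcongr
        exact pow_div_le_inv_mul_rpow hρ0 hρ1.le hN n
    _ = ρ⁻¹ * V * (ρ ^ (1 / N : ℝ)) ^ n := by ring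

end IsHolderKernel

end TransferOperator

section Limits

lemma abs_sub_one_le_of_integral_mul_eq_one {Ω : Type*} [MeasurableSpace Ω] {μ : Measure Ω}
    {u h : Ω → ℝ} (hh0 : ∀ y, 0 ≤ h y) (hhi : Integrable h μ)
    (hui : Integrable (fun y => u y * h y) μ) (hh1 : ∫ y, h y ∂μ = 1)
    (hu1 : ∫ y, u y * h y ∂μ = 1) {x : Ω} {ε : ℝ} (hε : ∀ y, |u x - u y| ≤ ε) :
    |u x - 1| ≤ ε := by
  have e : u x - 1 = ∫ y, (u x - u y) * h y ∂μ := by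
    simp only [sub_mul]
    rw [integral_sub (hhi.const_mul _) hui, MeasureTheory.integral_const_mul, hh1, hu1, mul_one]
  rw [e, ← Real.norm_eq_abs]
  calc ‖∫ y, (u x - u y) * h y ∂μ‖ ≤ ∫ y, ε * h y ∂μ :=
        norm_integral_le_of_norm_le (hhi.const_mul ε) (ae_of_all _ fun y => by
          rw [Real.norm_eq_abs, abs_mul, abs_of_nonneg (hh0 y)]
          exact mul_le_mul_of_nonneg_right (hε y) (hh0 y))
    _ = ε := by rw [MeasureTheory.integral_const_mul, hh1, mul_one]

lemma tendsto_inv_mul_log_of_tendsto_div_pow {a : ℕ → ℝ} {lam b : ℝ} (hlam : 0 < lam) (hb : 0 < b)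
    (ha : Tendsto (fun n => a n / (lam ^ n * b)) atTop (𝓝 1)) :
    Tendsto (fun n : ℕ => (1 / (n : ℝ)) * Real.log (a n)) atTop (𝓝 (Real.log lam)) := by
  have hrest : Tendsto (fun n : ℕ => (1 / (n : ℝ)) * (Real.log b + Real.log (a n / (lam ^ n * b))))
      atTop (𝓝 0) := by
    simpa using tendsto_one_div_atTop_nhds_zero_nat.mul
      (tendsto_const_nhds.add (ha.log one_ne_zero))
  have hlim := hrest.const_add (Real.log lam)
  rw [add_zero] at hlim
  refine hlim.congr' ?_
  filter_upwards [ha.eventually_const_lt zero_lt_one, eventually_ge_atTop 1] with n hpos hn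
  have han : a n = lam ^ n * b * (a n / (lam ^ n * b)) := by
    field_simp
  rw [han, Real.log_mul (by positivity) hpos.ne', Real.log_mul (by positivity) hb.ne',
    Real.log_pow, ← han]
  field_simp
  ring

end Limits

section Ruelle

variable {E : Type*} {f h : (ℕ → E) → ℝ} {lam : ℝ}

/-- The kernel of the normalized operator `φ ↦ L_f (h φ) / (λ h)`. -/
def normKernel (f h : (ℕ → E) → ℝ) (lam : ℝ) (a : E) (x : ℕ → E) : ℝ :=
  Real.exp (f (cons a x)) * h (cons a x) / (lam * h x)

lemma normKernel_le_exp_mul [MetricSpace E] {α Df Dh c : ℝ} (hα : 0 ≤ α) (hDf : 0 ≤ Df)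
    (hf : HolderConst α Df f) (hc : 0 < c) (hch : ∀ x, c ≤ h x) (hDh : 0 ≤ Dh)
    (hh : HolderConst α Dh h) (hlam : 0 < lam) (a : E) (x y : ℕ → E) :
    normKernel f h lam a x ≤
      Real.exp ((Df + 2 * (Dh / c)) * dX x y ^ α) * normKernel f h lam a y := by
  have hpos : ∀ x, 0 < h x := fun x => hc.trans_le (hch x)
  set t := dX x y ^ α
  have ht : dX (cons a x) (cons a y) ^ α ≤ t := by
    rw [dX_cons_cons_rpow]
    exact mul_le_of_le_one_left (dX_rpow_nonneg α x y)
      (Real.rpow_le_one (by norm_num) (by norm_num) hα)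
  have hexp : Real.exp (f (cons a x)) ≤ Real.exp (Df * t) * Real.exp (f (cons a y)) := by
    rw [← Real.exp_add, Real.exp_le_exp]
    nlinarith [(abs_le.1 (hf (cons a x) (cons a y))).2]
  have hcons : h (cons a x) ≤ Real.exp (Dh / c * t) * h (cons a y) :=
    (le_exp_mul_of_holderConst hc hch hDh hh _ _).trans (mul_le_mul_of_nonneg_right
      (Real.exp_le_exp.2 (mul_le_mul_of_nonneg_left ht (div_nonneg hDh hc.le))) (hpos _).le)
  have hbase : h y ≤ Real.exp (Dh / c * t) * h x := by
    simpa only [dX_comm y x] using le_exp_mul_of_holderConst hc hch hDh hh y x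
  have hsplit : Real.exp ((Df + 2 * (Dh / c)) * t) =
      Real.exp (Df * t) * Real.exp (Dh / c * t) * Real.exp (Dh / c * t) := by
    rw [← Real.exp_add, ← Real.exp_add]
    ring_nf
  have hx := hpos x
  have hy := hpos y
  rw [normKernel, normKernel, hsplit, div_le_iff₀ (by positivity)]
  calc Real.exp (f (cons a x)) * h (cons a x)
      ≤ (Real.exp (Df * t) * Real.exp (f (cons a y))) *
          (Real.exp (Dh / c * t) * h (cons a y)) := by
        gcongr
        exact (hpos _).le
    _ ≤ (Real.exp (Df * t) * Real.exp (f (cons a y))) *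
          (Real.exp (Dh / c * t) * h (cons a y)) * (Real.exp (Dh / c * t) * h x / h y) := by
        refine le_mul_of_one_le_right (by have := hpos (cons a y); positivity) ?_
        rwa [one_le_div hy]
    _ = _ := by field_simp

variable [MeasurableSpace E] {p : Measure E}

lemma isHolderKernel_normKernel [MetricSpace E] {α Df Dh c : ℝ} (hα : 0 ≤ α) (hfc : Continuous f)
    (hDf : 0 ≤ Df) (hf : HolderConst α Df f) (hhc : Continuous h) (hc : 0 < c)
    (hch : ∀ x, c ≤ h x) (hDh : 0 ≤ Dh) (hh : HolderConst α Dh h) (hlam : 0 < lam)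
    (heig : ∀ x, ruelle p f h x = lam * h x) :
    IsHolderKernel p α (Df + 2 * (Dh / c)) (normKernel f h lam) := by
  have hpos : ∀ x, 0 < h x := fun x => hc.trans_le (hch x)
  refine ⟨fun a x => by unfold normKernel; have := hpos (cons a x); have := hpos x; positivity,
    fun x => ?_, normKernel_le_exp_mul hα hDf hf hc hch hDh hh hlam, by positivity,
    fun x => ?_, fun a => ?_⟩
  · have hx := heig x
    unfold ruelle at hx
    simp only [normKernel]
    rw [integral_div, hx]
    exact div_self (mul_pos hlam (hpos x)).ne'
  · exact ((Real.continuous_exp.comp (hfc.comp (continuous_cons_left x))).mul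
      (hhc.comp (continuous_cons_left x))).div_const _
  · exact ((Real.continuous_exp.comp (hfc.comp (continuous_cons_right a))).mul
      (hhc.comp (continuous_cons_right a))).div (continuous_const.mul hhc)
      fun x => (mul_pos hlam (hpos x)).ne'

lemma ruelle_const_mul (r : ℝ) (φ : (ℕ → E) → ℝ) (x : ℕ → E) :
    ruelle p f (fun y => r * φ y) x = r * ruelle p f φ x := by
  simp only [ruelle, ← MeasureTheory.integral_const_mul, mul_left_comm]

lemma ruelle_mul_eq_transferOp (hlam : lam ≠ 0) (φ : (ℕ → E) → ℝ) {x : ℕ → E} (hx : h x ≠ 0) :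
    ruelle p f (fun y => h y * φ y) x =
      lam * h x * transferOp p (normKernel f h lam) φ x := by
  simp only [ruelle, transferOp, normKernel, ← MeasureTheory.integral_const_mul]
  congr 1 with a
  field_simp

lemma iterate_ruelle_one (hlam : lam ≠ 0) (hh : ∀ x, h x ≠ 0) (n : ℕ) (x : ℕ → E) :
    (ruelle p f)^[n] (fun _ => 1) x =
      lam ^ n * h x * (transferOp p (normKernel f h lam))^[n] (fun y => (h y)⁻¹) x := by
  induction n generalizing x with
  | zero => simp [hh x]
  | succ n ih =>
    rw [Function.iterate_succ_apply', Function.iterate_succ_apply', funext ih]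
    simp only [mul_assoc]
    rw [ruelle_const_mul, ruelle_mul_eq_transferOp hlam _ (hh x), pow_succ]
    ring

lemma MemCb.integrable [MetricSpace E] [OpensMeasurableSpace E] [SecondCountableTopology E]
    {ν : Measure (ℕ → E)} [IsFiniteMeasure ν] {g : (ℕ → E) → ℝ} (hg : MemCb g) : Integrable g ν :=
  let ⟨M, hM⟩ := hg.2
  .of_bound hg.1.aestronglyMeasurable M (ae_of_all _ hM)

lemma integral_iterate_ruelle_one [MetricSpace E] {ν : Measure (ℕ → E)} [IsProbabilityMeasure ν]
    (hconf : ∀ φ : (ℕ → E) → ℝ, MemCb φ → ∫ x, ruelle p f φ x ∂ν = lam * ∫ x, φ x ∂ν)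
    (hmem : ∀ n, MemCb ((ruelle p f)^[n] fun _ => 1)) (n : ℕ) :
    ∫ x, (ruelle p f)^[n] (fun _ => 1) x ∂ν = lam ^ n := by
  induction n with
  | zero => simp
  | succ n ih => rw [Function.iterate_succ_apply', hconf _ (hmem n), ih, pow_succ, mul_comm]

lemma exists_abs_iterate_ruelle_div_sub_one_le [MetricSpace E] [OpensMeasurableSpace E]
    [SecondCountableTopology E] {α : ℝ} (hα : 0 < α) {Df Dh c : ℝ} (hfc : Continuous f)
    (hDf : 0 ≤ Df) (hf : HolderConst α Df f) (hh : MemCb h) (hc : 0 < c) (hch : ∀ x, c ≤ h x)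
    (hDh : 0 ≤ Dh) (hhD : HolderConst α Dh h) {ν : Measure (ℕ → E)} [IsProbabilityMeasure ν]
    (hlam : 0 < lam)
    (hconf : ∀ φ : (ℕ → E) → ℝ, MemCb φ → ∫ x, ruelle p f φ x ∂ν = lam * ∫ x, φ x ∂ν)
    (heig : ∀ x, ruelle p f h x = lam * h x) (hnorm : ∫ x, h x ∂ν = 1) :
    ∃ C s : ℝ, 0 < s ∧ s < 1 ∧ ∀ n x,
      |(ruelle p f)^[n] (fun _ => 1) x / (lam ^ n * h x) - 1| ≤ C * s ^ n := by
  have hpos : ∀ x, 0 < h x := fun x => hc.trans_le (hch x)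
  have hk := isHolderKernel_normKernel (p := p) hα.le hfc hDf hf hh.1 hc hch hDh hhD hlam heig
  have hinv : ∀ y, 0 ≤ (h y)⁻¹ ∧ (h y)⁻¹ ≤ c⁻¹ := fun y =>
    ⟨(inv_pos.2 (hpos y)).le, inv_anti₀ hc (hch y)⟩
  have hψ : MemCb fun y => (h y)⁻¹ :=
    ⟨hh.1.inv₀ fun y => (hpos y).ne', c⁻¹, fun y => by
      rw [abs_of_nonneg (hinv y).1]; exact (hinv y).2⟩
  obtain ⟨C, s, hs0, hs1, hdecay⟩ := hk.exists_abs_iterate_transferOp_sub_le_geometric hα hψ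
    (hhD.inv hc hch) fun x y =>
      abs_sub_le_of_nonneg_of_le (hinv x).1 (hinv x).2 (hinv y).1 (hinv y).2
  set u := fun n => (transferOp p (normKernel f h lam))^[n] fun y => (h y)⁻¹
  have hiter : ∀ n x, (ruelle p f)^[n] (fun _ => 1) x = lam ^ n * h x * u n x :=
    iterate_ruelle_one hlam.ne' fun x => (hpos x).ne'
  have hu : ∀ n, MemCb (u n) := hk.memCb_iterate_transferOp hα.le hψ
  have hmem : ∀ n, MemCb ((ruelle p f)^[n] fun _ => 1) := fun n => by
    rw [funext (hiter n)]
    exact ((memCb_const _).mul hh).mul (hu n)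
  refine ⟨C, s, hs0, hs1, fun n x => ?_⟩
  rw [hiter, mul_div_cancel_left₀ _ (by have := hpos x; positivity)]
  -- `u n` has `ν`-average one against the weight `h`, so its oscillation bounds `|u n x - 1|`
  have huh : ∀ y, u n y * h y = (lam ^ n)⁻¹ * (ruelle p f)^[n] (fun _ => 1) y := fun y => by
    rw [hiter, ← mul_assoc, ← mul_assoc, inv_mul_cancel₀ (by positivity), one_mul, mul_comm]
  refine abs_sub_one_le_of_integral_mul_eq_one (μ := ν) (fun y => (hpos y).le) hh.integrable
    ((hu n).mul hh).integrable hnorm ?_ (hdecay n x)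
  rw [funext huh, MeasureTheory.integral_const_mul, integral_iterate_ruelle_one hconf hmem,
    inv_mul_cancel₀ (by positivity)]

end Ruelle

theorem statement9_general {E : Type*} [MetricSpace E]
    [TopologicalSpace.SeparableSpace E] [MeasurableSpace E] [BorelSpace E]
    (p : Measure E)
    (α : ℝ) (hα0 : 0 < α)
    (f : (ℕ → E) → ℝ) (hf : MemHol α f)
    (ν : Measure (ℕ → E)) (hν : IsProbabilityMeasure ν) (lam : ℝ) (hlam : 0 < lam)
    (hconf : ∀ φ : (ℕ → E) → ℝ, MemCb φ →
      (∫ x, ruelle p f φ x ∂ν) = lam * ∫ x, φ x ∂ν)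
    (h : (ℕ → E) → ℝ) (hh : MemHol α h)
    (hbd : ∃ c C : ℝ, 0 < c ∧ (∀ x, c ≤ h x) ∧ ∀ x, h x ≤ C)
    (heig : ∀ x, ruelle p f h x = lam * h x)
    (hnorm : (∫ x, h x ∂ν) = 1) :
    (∃ C s : ℝ, 0 < C ∧ 0 < s ∧ s < 1 ∧ ∀ (n : ℕ) (x : ℕ → E),
      1 - 2 * C * s ^ n ≤ (ruelle p f)^[n] (fun _ => 1) x / (lam ^ n * h x) ∧
      (ruelle p f)^[n] (fun _ => 1) x / (lam ^ n * h x) ≤ 1 + 2 * C * s ^ n) ∧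
    ∀ x : ℕ → E, Tendsto
      (fun n : ℕ => (1 / (n : ℝ)) * Real.log ((ruelle p f)^[n] (fun _ => 1) x))
      atTop (nhds (Real.log lam)) := by
  have : SecondCountableTopology E := UniformSpace.secondCountable_of_separable E
  obtain ⟨hfc, -, Df, hDf⟩ := hf
  obtain ⟨hhc, hhb, Dh, hDh⟩ := hh
  obtain ⟨c, -, hc, hch, -⟩ := hbd
  obtain ⟨C, s, hs0, hs1, hclose⟩ := exists_abs_iterate_ruelle_div_sub_one_le hα0 hfc
    (le_max_right Df 0) (hDf.mono (le_max_left Df 0)) ⟨hhc, hhb⟩ hc hch (le_max_right Dh 0)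
    (hDh.mono (le_max_left Dh 0)) hlam hconf heig hnorm
  refine ⟨⟨max C 1, s, by positivity, hs0, hs1, fun n x => ?_⟩, fun x => ?_⟩
  · have := mul_le_mul_of_nonneg_right
      (show C ≤ 2 * max C 1 by linarith [le_max_left C 1, le_max_right C 1]) (pow_nonneg hs0.le n)
    constructor <;> linarith [abs_le.1 (hclose n x)]
  · refine tendsto_inv_mul_log_of_tendsto_div_pow hlam (hc.trans_le (hch x)) ?_
    rw [tendsto_iff_norm_sub_tendsto_zero]
    refine squeeze_zero_norm (a := fun n => C * s ^ n) (fun n => ?_) ?_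
    · rw [norm_norm, Real.norm_eq_abs]
      exact hclose n x
    · simpa using (tendsto_pow_atTop_nhds_zero_of_lt_one hs0.le hs1).const_mul C

/-- Uniform two-sided estimate
`1 − 2Csⁿ ≤ L_f^n 1(x)/(λⁿ h(x)) ≤ 1 + 2Csⁿ`, and consequently
`(1/n) log L_f^n 1(x) → log λ` for every `x`. -/
theorem statement9 {E : Type*} [MetricSpace E] [CompleteSpace E]
    [TopologicalSpace.SeparableSpace E] [MeasurableSpace E] [BorelSpace E] [Nonempty E]
    (p : Measure E) [IsProbabilityMeasure p]
    (α : ℝ) (hα0 : 0 < α) (hα1 : α < 1)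
    (f : (ℕ → E) → ℝ) (hf : MemHol α f)
    (ν : Measure (ℕ → E)) (hν : IsProbabilityMeasure ν) (lam : ℝ) (hlam : 0 < lam)
    (hconf : ∀ φ : (ℕ → E) → ℝ, MemCb φ →
      (∫ x, ruelle p f φ x ∂ν) = lam * ∫ x, φ x ∂ν)
    (h : (ℕ → E) → ℝ) (hh : MemHol α h)
    (hbd : ∃ c C : ℝ, 0 < c ∧ (∀ x, c ≤ h x) ∧ ∀ x, h x ≤ C)
    (heig : ∀ x, ruelle p f h x = lam * h x)
    (hnorm : (∫ x, h x ∂ν) = 1) :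
    (∃ C s : ℝ, 0 < C ∧ 0 < s ∧ s < 1 ∧ ∀ (n : ℕ) (x : ℕ → E),
      1 - 2 * C * s ^ n ≤ (ruelle p f)^[n] (fun _ => 1) x / (lam ^ n * h x) ∧
      (ruelle p f)^[n] (fun _ => 1) x / (lam ^ n * h x) ≤ 1 + 2 * C * s ^ n) ∧
    ∀ x : ℕ → E, Tendsto
      (fun n : ℕ => (1 / (n : ℝ)) * Real.log ((ruelle p f)^[n] (fun _ => 1) x))
      atTop (nhds (Real.log lam)) :=
  statement9_general p α hα0 f hf ν hν lam hlam hconf h hh hbd heig hnorm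

end
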